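/- arXiv:1702.08151 — 2 statements merged into one kernel-verified Lean document; each statement's English description precedes it below -/
import Mathlib

section
/- Let G be a finite simple graph with no independent set of three vertices (i.e., G is 3K₁-free). If the clique number of G equals 4 and the maximum degree Δ(G) is at least 7, then the chromatic number of G is at most Δ(G) − 1. -/
/-!
Colour classes of a `3K₁`-free graph `G` have at most two vertices, so `χ(G) ≤ n - ν(Gᶜ)` for the
matching number `ν` of `H = Gᶜ`, and it suffices to show `ν(H) ≥ k + 2`, where
`k = n - 1 - Δ(G)` bounds the degrees of `H` from below. Take a maximum matching of `H`. Its
unmatched vertices are independent, hence at most four, and `k ≤ 4` because neighbourhoods in the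
triangle-free graph `H` are independent. Excluding augmenting paths of length 1, 3 and 5 shows: if
three vertices are unmatched, there are at most two matching edges; if two vertices `u, w` are
unmatched, the neighbourhoods of `u` and `w` meet each matching edge at most once and share at most
two vertices, so `4k ≤ 2ν + 4`. Since `n ≥ k + 8`, neither case is compatible with `ν ≤ k + 1`.
-/

open Finset Equiv

namespace SimpleGraph

variable {V : Type*}

lemma IsClique.card_le_of_cliqueFree {G : SimpleGraph V} {n : ℕ} (h : G.CliqueFree (n + 1))
    {s : Finset V} (hs : G.IsClique (s : Set V)) : #s ≤ n := by
  by_contra! hlt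
  obtain ⟨t, hts, ht⟩ := exists_subset_card_eq (Nat.succ_le_of_lt hlt)
  exact h t ⟨hs.subset (by simpa using hts), ht⟩

lemma degree_le_indepNum_of_cliqueFree {G : SimpleGraph V} [Fintype V] [DecidableRel G.Adj]
    (h : G.CliqueFree 3) (v : V) : G.degree v ≤ G.indepNum := by
  rw [← card_neighborFinset_eq_degree]
  exact IsIndepSet.card_le_indepNum (by simpa using G.isIndepSet_neighborSet_of_triangleFree h v)

/-- A matching of `H` encoded as the involution swapping the two ends of each matching edge;
its support is the set of matched vertices. -/
structure IsMatchingInvolution (H : SimpleGraph V) (σ : Perm V) : Prop where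
  involutive : Function.Involutive σ
  adj_apply : ∀ ⦃v⦄, σ v ≠ v → H.Adj v (σ v)

variable [Fintype V] [DecidableEq V] {H : SimpleGraph V} {σ : Perm V} {u w a b : V}

structure IsMaximumMatchingInvolution (H : SimpleGraph V) (σ : Perm V) : Prop
    extends H.IsMatchingInvolution σ where
  card_support_le : ∀ τ, H.IsMatchingInvolution τ → #τ.support ≤ #σ.support

variable (H) in
lemma exists_isMaximumMatchingInvolution : ∃ σ, H.IsMaximumMatchingInvolution σ := by
  classical
  have h1 : H.IsMatchingInvolution 1 := ⟨fun _ => rfl, fun _ h => absurd rfl h⟩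
  obtain ⟨σ, hσ, hmax⟩ := exists_max_image {τ : Perm V | H.IsMatchingInvolution τ}
    (fun τ => #τ.support) ⟨1, by simpa using h1⟩
  exact ⟨σ, (mem_filter.1 hσ).2, fun τ hτ => hmax τ (by simpa using hτ)⟩

namespace IsMaximumMatchingInvolution

variable (hσ : H.IsMaximumMatchingInvolution σ)
include hσ

theorem not_adj_of_fixed (hu : σ u = u) (hw : σ w = w) : ¬ H.Adj u w := by
  intro huw
  have hdisj : (swap u w).Disjoint σ := fun x => by
    rw [swap_apply_def]; split_ifs <;> simp_all
  have hτ : H.IsMatchingInvolution (swap u w * σ) := by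
    refine ⟨fun x => ?_, fun x hx => ?_⟩
    · simp only [Perm.mul_apply, swap_apply_def]
      split_ifs <;> grind [hσ.involutive x]
    · have hinv : ∀ y, σ (σ y) = y := hσ.involutive
      simp only [Perm.mul_apply, swap_apply_def] at hx ⊢
      split_ifs at hx ⊢ <;> grind [hσ.adj_apply, huw.symm]
  have := hσ.card_support_le _ hτ
  rw [hdisj.card_support_mul, Perm.card_support_swap huw.ne] at this
  omega

/-- Re-routing the matching edge at `a` to the unmatched vertex `u` frees `σ a`; this shortens
augmenting paths of length 3 and 5 to the length-1 case `not_adj_of_fixed`. -/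
theorem conj_swap (hu : σ u = u) (ha : H.Adj u a) :
    H.IsMaximumMatchingInvolution (swap u (σ a) * σ * swap u (σ a)) := by
  have hτ : H.IsMatchingInvolution (swap u (σ a) * σ * swap u (σ a)) := by
    refine ⟨fun x => ?_, fun x hx => ?_⟩
    · simp [hσ.involutive _]
    · have hinv : ∀ y, σ (σ y) = y := hσ.involutive
      simp only [Perm.mul_apply, swap_apply_def] at hx ⊢
      split_ifs at hx ⊢ <;> grind [hσ.adj_apply, ha.symm]
  refine ⟨hτ, fun τ hτ' => ?_⟩
  have hconj := Perm.card_support_conj (σ := swap u (σ a)) (τ := σ)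
  rw [swap_inv] at hconj
  exact hconj ▸ hσ.card_support_le τ hτ'

theorem apply_ne_of_adj (hu : σ u = u) (ha : H.Adj u a) : σ a ≠ a :=
  fun h => hσ.not_adj_of_fixed hu h ha

theorem ne_apply_of_adj (hu : σ u = u) (hw : σ w = w) (ha : H.Adj u a) : w ≠ σ a :=
  fun h => hσ.apply_ne_of_adj hu ha (by grind [hσ.involutive a])

theorem not_adj_apply_of_adj (hu : σ u = u) (hw : σ w = w) (huw : u ≠ w) (ha : H.Adj u a) :
    ¬ H.Adj w (σ a) := by
  have hwa := hσ.ne_apply_of_adj hu hw ha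
  have hτ := hσ.conj_swap hu ha
  refine hτ.not_adj_of_fixed ?_ ?_
  · simp [swap_apply_of_ne_of_ne huw.symm hwa, hw]
  · simp [hu]

theorem not_adj_apply_apply_of_adj (hu : σ u = u) (hw : σ w = w) (huw : u ≠ w) (ha : H.Adj u a)
    (hb : H.Adj w b) (hba : b ≠ a) (hba' : b ≠ σ a) : ¬ H.Adj (σ a) (σ b) := by
  have hwa := hσ.ne_apply_of_adj hu hw ha
  have hbu : b ≠ u := by rintro rfl; exact hσ.not_adj_of_fixed hw hu hb
  have hτb : (swap u (σ a) * σ * swap u (σ a)) b = σ b := by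
    rw [Perm.mul_apply, Perm.mul_apply, swap_apply_of_ne_of_ne hbu hba',
      swap_apply_of_ne_of_ne (fun h => hbu (by simpa [hu, hσ.involutive b] using congrArg σ h))
        (fun h => hba (σ.injective h))]
  have := (hσ.conj_swap hu ha).not_adj_apply_of_adj (u := w) (w := σ a) ?_ ?_ hwa hb
  · rwa [hτb] at this
  · simp [swap_apply_of_ne_of_ne huw.symm hwa, hw]
  · simp [hu]

theorem not_adj_apply_of_adj_of_cliqueFree (h3 : H.CliqueFree 3) (hu : σ u = u) (hw : σ w = w)
    (ha : H.Adj u a) : ¬ H.Adj w (σ a) := by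
  rcases eq_or_ne u w with rfl | huw
  · exact fun hua' => h3 _
      (is3Clique_triple_iff.2 ⟨ha, hua', hσ.adj_apply (hσ.apply_ne_of_adj hu ha)⟩)
  · exact hσ.not_adj_apply_of_adj hu hw huw ha

theorem isIndepSet_compl_support : H.IsIndepSet (σ.supportᶜ : Finset V) := by
  intro u hu w hw _
  simp only [coe_compl, Set.mem_compl_iff, mem_coe, Perm.mem_support, not_not] at hu hw
  exact hσ.not_adj_of_fixed hu hw

theorem card_add_card_compl_support_le_indepNum {s : Finset V} (hs : H.IsIndepSet (s : Set V))
    (hsupp : s ⊆ σ.support) (hsU : ∀ v ∈ s, ∀ u, σ u = u → ¬ H.Adj u v) :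
    #s + #σ.supportᶜ ≤ H.indepNum := by
  rw [← card_union_of_disjoint (disjoint_of_subset_left hsupp disjoint_compl_right)]
  refine IsIndepSet.card_le_indepNum ?_
  rw [coe_union, isIndepSet_iff, Set.pairwise_union]
  refine ⟨hs, hσ.isIndepSet_compl_support, fun v hv u hu _ => ?_⟩
  simp only [coe_compl, Set.mem_compl_iff, mem_coe, Perm.mem_support, not_not] at hu
  exact ⟨fun h => hsU v hv u hu h.symm, hsU v hv u hu⟩

theorem card_support_le_four (h3 : H.CliqueFree 3) (hU : H.indepNum < #σ.supportᶜ + 2) :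
    #σ.support ≤ 4 := by
  classical
  -- `F` is a clique, and every matching edge has an end in `F`.
  set F := σ.support.filter (fun v => ∀ u, σ u = u → ¬ H.Adj u v) with hF
  have hFclique : H.IsClique (F : Set V) := by
    intro p hp q hq hpq
    by_contra hnadj
    simp only [hF, coe_filter, Set.mem_ofPred_eq] at hp hq
    have hpq' : H.IsIndepSet (({p, q} : Finset V) : Set V) := by
      rw [coe_pair, isIndepSet_iff, Set.pairwise_pair]
      exact fun _ => ⟨hnadj, fun h => hnadj h.symm⟩
    have := hσ.card_add_card_compl_support_le_indepNum hpq'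
      (insert_subset hp.1 (singleton_subset_iff.2 hq.1)) (by simpa using ⟨hp.2, hq.2⟩)
    rw [card_pair hpq] at this
    omega
  have hcover : σ.support ⊆ F ∪ F.image σ := by
    intro v hv
    by_cases hvF : v ∈ F
    · exact mem_union_left _ hvF
    · refine mem_union_right _ (mem_image.2 ⟨σ v, ?_, hσ.involutive v⟩)
      simp only [hF, mem_filter, not_and, not_forall, not_not] at hvF ⊢
      obtain ⟨u, hu, huv⟩ := hvF hv
      exact ⟨Perm.apply_mem_support.2 hv,
        fun w hw => hσ.not_adj_apply_of_adj_of_cliqueFree h3 hu hw huv⟩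
  calc #σ.support ≤ #(F ∪ F.image σ) := card_le_card hcover
    _ ≤ #F + #F := (card_union_le _ _).trans (Nat.add_le_add_left card_image_le _)
    _ ≤ 4 := by have := hFclique.card_le_of_cliqueFree h3; omega

variable [DecidableRel H.Adj]

theorem card_inter_neighborFinset_add_le_indepNum (h3 : H.CliqueFree 3) (hu : σ u = u)
    (hw : σ w = w) (huw : u ≠ w) :
    #(H.neighborFinset u ∩ H.neighborFinset w) + #σ.supportᶜ ≤ H.indepNum := by
  set C := H.neighborFinset u ∩ H.neighborFinset w
  have hC : ∀ a ∈ C, H.Adj u a ∧ H.Adj w a := by simp [C]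
  rw [← card_image_of_injective C σ.injective]
  refine hσ.card_add_card_compl_support_le_indepNum ?_ ?_ ?_
  · rw [coe_image, isIndepSet_iff]
    rintro _ ⟨a, ha, rfl⟩ _ ⟨b, hb, rfl⟩ hab
    have hba : b ≠ a := by rintro rfl; exact hab rfl
    have hba' : b ≠ σ a := by
      rintro rfl
      exact hσ.not_adj_apply_of_adj_of_cliqueFree h3 hu hu (hC a ha).1 (hC _ hb).1
    exact hσ.not_adj_apply_apply_of_adj hu hw huw (hC a ha).1 (hC b hb).2 hba hba'
  · intro x hx
    obtain ⟨a, ha, rfl⟩ := mem_image.1 hx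
    exact Perm.apply_mem_support.2 (Perm.mem_support.2 (hσ.apply_ne_of_adj hu (hC a ha).1))
  · intro x hx z hz
    obtain ⟨a, ha, rfl⟩ := mem_image.1 hx
    exact hσ.not_adj_apply_of_adj_of_cliqueFree h3 hu hz (hC a ha).1

theorem two_mul_degree_add_degree_le (h3 : H.CliqueFree 3) (hu : σ u = u) (hw : σ w = w) :
    2 * (H.degree u + H.degree w) ≤
      #σ.support + 2 * #(H.neighborFinset u ∩ H.neighborFinset w) := by
  set W := H.neighborFinset u ∪ H.neighborFinset w
  have hW : ∀ a ∈ W, ∃ x, σ x = x ∧ H.Adj x a := by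
    intro a ha
    rcases mem_union.1 ha with ha | ha
    · exact ⟨u, hu, (mem_neighborFinset _ _ _).1 ha⟩
    · exact ⟨w, hw, (mem_neighborFinset _ _ _).1 ha⟩
  have hWsupp : W ⊆ σ.support := fun a ha => by
    obtain ⟨x, hx, hxa⟩ := hW a ha
    exact Perm.mem_support.2 (hσ.apply_ne_of_adj hx hxa)
  have hdisj : Disjoint W (W.image σ) := by
    refine Finset.disjoint_left.2 fun a haW ha' => ?_
    obtain ⟨b, hb, rfl⟩ := mem_image.1 ha'
    obtain ⟨x, hx, hxb⟩ := hW b hb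
    obtain ⟨y, hy, hya⟩ := hW _ haW
    exact hσ.not_adj_apply_of_adj_of_cliqueFree h3 hx hy hxb hya
  have h2W : 2 * #W ≤ #σ.support := by
    have := card_le_card (union_subset hWsupp
      (image_subset_iff.2 fun a ha => Perm.apply_mem_support.2 (hWsupp ha)))
    rw [card_union_of_disjoint hdisj, card_image_of_injective _ σ.injective] at this
    omega
  have hsum : #W + #(H.neighborFinset u ∩ H.neighborFinset w) = H.degree u + H.degree w := by
    rw [card_union_add_card_inter, card_neighborFinset_eq_degree, card_neighborFinset_eq_degree]
  omega

theorem two_mul_add_two_le_card_support (h3 : H.CliqueFree 3) (hα : H.indepNum ≤ 4) {k : ℕ}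
    (hk : ∀ v, k ≤ H.degree v) (hn : k + 8 ≤ Fintype.card V) : 2 * (k + 2) ≤ #σ.support := by
  have hcard : #σ.supportᶜ + #σ.support = Fintype.card V := card_compl_add_card _
  have heven : 2 ∣ #σ.support :=
    Perm.two_dvd_card_support (by ext v; simp [sq, hσ.involutive v])
  have hU : #σ.supportᶜ ≤ 4 := hσ.isIndepSet_compl_support.card_le_indepNum.trans hα
  have hk4 : k ≤ 4 := by
    obtain ⟨v⟩ : Nonempty V := Fintype.card_pos_iff.1 (by omega)
    exact (hk v).trans ((degree_le_indepNum_of_cliqueFree h3 v).trans hα)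
  have hA : 3 ≤ #σ.supportᶜ → #σ.support ≤ 4 := fun h => hσ.card_support_le_four h3 (by omega)
  have hB : 2 ≤ #σ.supportᶜ → 4 * k ≤ #σ.support + 4 := by
    intro h
    obtain ⟨u, hu, w, hw, huw⟩ := one_lt_card.1 h
    simp only [mem_compl, Perm.mem_support, not_not] at hu hw
    have := hσ.card_inter_neighborFinset_add_le_indepNum h3 hu hw huw
    have := hσ.two_mul_degree_add_degree_le h3 hu hw
    have := hk u
    have := hk w
    omega
  omega

end IsMaximumMatchingInvolution

theorem IsMatchingInvolution.colorable {G : SimpleGraph V} (hσ : Gᶜ.IsMatchingInvolution σ) :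
    G.Colorable (Fintype.card V - #σ.support / 2) := by
  let _ : LinearOrder V := LinearOrder.lift' _ (Fintype.equivFin V).injective
  -- colour each vertex by the smaller end of its matching edge
  set S : Finset V := {v | v ≤ σ v}
  have hS : ∀ v, min v (σ v) ∈ S := by
    intro v
    rcases le_total v (σ v) with h | h
    · simpa [S, min_eq_left h] using h
    · simpa [S, min_eq_right h, hσ.involutive v] using h
  have hsame : ∀ v w, min v (σ v) = min w (σ w) → w = v ∨ w = σ v := by
    intro v w h
    have := hσ.involutive v
    have := hσ.involutive w
    rcases min_choice v (σ v) with h1 | h1 <;> rcases min_choice w (σ w) with h2 | h2 <;>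
      grind
  let C : G.Coloring S := Coloring.mk (fun v => ⟨min v (σ v), hS v⟩) fun {v w} hvw heq => by
    rcases hsame v w (Subtype.ext_iff.1 heq) with rfl | rfl
    · exact G.irrefl hvw
    · exact ((compl_adj G _ _).1 (hσ.adj_apply hvw.ne.symm)).2 hvw
  have hcard : 2 * #S = 2 * Fintype.card V - #σ.support := by
    set Q : Finset V := {v | σ v ≤ v}
    have hQ : Q = S.image σ := by
      ext v
      simp only [Q, S, mem_filter, mem_univ, true_and, mem_image]
      refine ⟨fun h => ⟨σ v, by rwa [hσ.involutive v], hσ.involutive v⟩, ?_⟩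
      rintro ⟨x, hx, rfl⟩
      rwa [hσ.involutive x]
    have hunion : S ∪ Q = univ := by ext v; simp [S, Q, le_total]
    have hinter : S ∩ Q = σ.supportᶜ := by ext v; simp [S, Q, le_antisymm_iff, and_comm]
    have := card_union_add_card_inter S Q
    rw [hunion, hinter, card_univ, hQ, card_image_of_injective S σ.injective] at this
    have := card_compl_add_card σ.support
    omega
  exact C.colorable.mono (by rw [Fintype.card_coe]; omega)

end SimpleGraph

/-- If a finite simple graph `G` is `3K₁`-free (i.e. its complement is triangle-free,
equivalently `G` has no independent set of three vertices), its clique number is `4`,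
and its maximum degree is at least `7`, then `χ(G) ≤ Δ(G) - 1`. -/
theorem stmt_0 {V : Type*} [Fintype V] (G : SimpleGraph V) [DecidableRel G.Adj]
    (h3K1 : Gᶜ.CliqueFree 3) (hω : G.cliqueNum = 4) (hΔ : 7 ≤ G.maxDegree) :
    G.chromaticNumber ≤ (G.maxDegree - 1 : ℕ) := by
  classical
  have : Nonempty V := by
    by_contra h
    have := G.maxDegree_le_of_forall_degree_le 0 fun v => (not_nonempty_iff.1 h).elim v
    omega
  have hΔn := G.maxDegree_lt_card_verts
  obtain ⟨σ, hσ⟩ := Gᶜ.exists_isMaximumMatchingInvolution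
  have hk : ∀ v, Fintype.card V - 1 - G.maxDegree ≤ Gᶜ.degree v := fun v => by
    rw [SimpleGraph.degree_compl]
    have := G.degree_le_maxDegree v
    omega
  have := hσ.two_mul_add_two_le_card_support h3K1 (by simp [hω]) hk (by omega)
  exact (hσ.colorable.mono (by omega)).chromaticNumber_le
end

section
/- (Borodin–Kostochka conjecture for 3K₁-free graphs.) Let G be a finite simple graph with no independent set of three vertices (i.e., G is 3K₁-free). If the maximum degree Δ(G) is at least 9, then the chromatic number of G satisfies χ(G) ≤ max{ω(G), Δ(G) − 1}. -/
/-!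
Colouring each pair of a matching `P` of the complement `H = Gᶜ` with one colour gives
`χ(G) ≤ n - |P|`. Take `P` maximum and assume `n - |P| ≥ Δ(G)`, so that every vertex has
`H`-degree at least `|P| - 1`; it remains to find a clique of `G` (an independent set of `H`) of
size `n - |P|`.

If at least two vertices are unmatched, they are pairwise non-adjacent in `H`, and since `H` is
triangle-free at most one vertex of each pair sees an unmatched vertex; orient the pairs so that
the second vertex sees none. An unmatched vertex then has all its `H`-neighbours among the first
vertices, so by the degree bound it sees the first vertex of all pairs but at most one. If every
first vertex sees an unmatched vertex, an `H`-edge between two second vertices would allow an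
exchange of two pairs for three, so the unmatched vertices and the second vertices are
independent in `H`. Otherwise some pair `p₀` sees no unmatched vertex at all, and an exchange of
three pairs for four shows that a suitable vertex of `p₀` can replace its second vertex.

If at most one vertex is unmatched, `Δ(G) ≥ 9` forces the minimum degree of `H` above `2n/5`.
A vertex of a triangle-free graph sees at most two positions of a shortest odd closed walk, so
double counting bounds its length below five, which is impossible: `H` is bipartite, and its
larger side has `⌈n/2⌉ ≥ n - |P|` vertices.
-/

open Finset

namespace SimpleGraph

variable {V : Type*} {H : SimpleGraph V}

lemma CliqueFree.not_adj_of_adj_of_adj (h3 : H.CliqueFree 3) {a b c : V}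
    (hab : H.Adj a b) (hac : H.Adj a c) : ¬ H.Adj b c := by
  classical
  exact fun hbc => h3 {a, b, c} (is3Clique_triple_iff.2 ⟨hab, hac, hbc⟩)

namespace Walk

lemma exists_walk_getVert_length_eq_sub {u v : V} (p : H.Walk u v) {i j : ℕ} (hij : i ≤ j)
    (hj : j ≤ p.length) : ∃ q : H.Walk (p.getVert i) (p.getVert j), q.length = j - i :=
  ⟨((p.drop i).take (j - i)).copy rfl (by rw [drop_getVert]; congr 1; omega), by
    simp only [length_copy, take_length, drop_length]; omega⟩

lemma five_le_length_of_odd (h3 : H.CliqueFree 3) {v : V} (p : H.Walk v v)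
    (hodd : Odd p.length) : 5 ≤ p.length := by
  obtain ⟨k, hk⟩ := hodd
  have h0 := p.adj_getVert_succ (i := 0) (by omega)
  rw [getVert_zero] at h0
  rcases k with _ | _ | k
  · rw [show 0 + 1 = p.length by omega, getVert_length] at h0
    exact absurd h0 H.irrefl
  · have h1 := p.adj_getVert_succ (i := 1) (by omega)
    have h2 := p.adj_getVert_succ (i := 2) (by omega)
    rw [show 2 + 1 = p.length by omega, getVert_length] at h2
    exact absurd h1 (h3.not_adj_of_adj_of_adj h0 h2.symm)
  · omega

variable {v : V} {p : H.Walk v v}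

/-- A vertex adjacent to three positions of a shortest odd closed walk would, together with one
of the three arcs between them (one of which has odd length), close a shorter odd walk; arcs of
length one are excluded because they close triangles. -/
lemma not_adj_three_getVert (h3 : H.CliqueFree 3) (hodd : Odd p.length)
    (hmin : ∀ (x : V) (q : H.Walk x x), Odd q.length → p.length ≤ q.length) {w : V} {i j k : ℕ}
    (hij : i < j) (hjk : j < k) (hk : k < p.length)
    (hi : H.Adj w (p.getVert i)) (hj : H.Adj w (p.getVert j)) : ¬ H.Adj w (p.getVert k) := by
  intro hk'
  have no_short_arc : ∀ {x y : V} (q : H.Walk x y), H.Adj w x → H.Adj w y → Odd q.length →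
      q.length + 2 < p.length → False := fun q hx hy hq hlt => by
    have := hmin w (cons hx (q.concat hy.symm))
      (by rw [length_cons, length_concat, Nat.odd_iff] at *; omega)
    simp only [length_cons, length_concat] at this
    omega
  have hij2 : 2 ≤ j - i := by
    by_contra
    obtain rfl : j = i + 1 := by omega
    exact h3.not_adj_of_adj_of_adj hi hj (p.adj_getVert_succ (by omega))
  have hjk2 : 2 ≤ k - j := by
    by_contra
    obtain rfl : k = j + 1 := by omega
    exact h3.not_adj_of_adj_of_adj hj hk' (p.adj_getVert_succ (by omega))
  have hki2 : 2 ≤ p.length - k + i := by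
    by_contra
    obtain rfl : i = 0 := by omega
    have hkv := p.adj_getVert_succ hk
    rw [show k + 1 = p.length by omega, getVert_length] at hkv
    rw [getVert_zero] at hi
    exact h3.not_adj_of_adj_of_adj hk' hi hkv
  obtain ⟨a, ha⟩ := p.exists_walk_getVert_length_eq_sub hij.le (by omega)
  obtain ⟨b, hb⟩ := p.exists_walk_getVert_length_eq_sub hjk.le (by omega)
  obtain ⟨c₁, hc₁⟩ := p.exists_walk_getVert_length_eq_sub hk.le le_rfl
  obtain ⟨c₂, hc₂⟩ := p.exists_walk_getVert_length_eq_sub (Nat.zero_le i) (by omega)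
  let c := (c₁.copy rfl p.getVert_length).append (c₂.copy p.getVert_zero rfl)
  have hc : c.length = p.length - k + i := by simp [c, hc₁, hc₂]
  rw [Nat.odd_iff] at hodd
  have : (j - i) % 2 = 1 ∨ (k - j) % 2 = 1 ∨ (p.length - k + i) % 2 = 1 := by omega
  rcases this with h | h | h
  · exact no_short_arc a hi hj (Nat.odd_iff.2 (ha ▸ h)) (by omega)
  · exact no_short_arc b hj hk' (Nat.odd_iff.2 (hb ▸ h)) (by omega)
  · exact no_short_arc c hk' hi (Nat.odd_iff.2 (hc ▸ h)) (by omega)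

lemma card_filter_adj_getVert_le_two [DecidableRel H.Adj] (h3 : H.CliqueFree 3)
    (hodd : Odd p.length)
    (hmin : ∀ (x : V) (q : H.Walk x x), Odd q.length → p.length ≤ q.length) (w : V) :
    #{i ∈ range p.length | H.Adj (p.getVert i) w} ≤ 2 := by
  by_contra! h
  obtain ⟨a, ha, b, hb, c, hc, hab, hac, hbc⟩ := two_lt_card.1 h
  simp only [mem_filter, mem_range] at ha hb hc
  have key : ∀ {i j k : ℕ}, i < p.length ∧ H.Adj (p.getVert i) w →
      j < p.length ∧ H.Adj (p.getVert j) w → k < p.length ∧ H.Adj (p.getVert k) w →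
      i < j → j < k → False := fun hi hj hk hij hjk =>
    not_adj_three_getVert h3 hodd hmin hij hjk hk.1 hi.2.symm hj.2.symm hk.2.symm
  rcases hab.lt_or_gt with h₁ | h₁ <;> rcases hac.lt_or_gt with h₂ | h₂ <;>
    rcases hbc.lt_or_gt with h₃ | h₃
  all_goals first
    | omega
    | exact key ha hb hc h₁ h₃ | exact key ha hc hb h₂ (by omega)
    | exact key hb ha hc h₁ h₂ | exact key hb hc ha h₃ h₂
    | exact key hc ha hb h₂ h₁ | exact key hc hb ha (by omega) h₁

end Walk

theorem colorable_two_of_cliqueFree_three [Fintype V] [DecidableRel H.Adj]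
    (h3 : H.CliqueFree 3) (hδ : 2 * Fintype.card V < 5 * H.minDegree) : H.Colorable 2 := by
  classical
  refine two_colorable_iff_forall_loop_even.2 fun u q => Nat.not_odd_iff_even.1 fun hq => ?_
  have hex : ∃ ℓ, ∃ (v : V) (p : H.Walk v v), p.length = ℓ ∧ Odd ℓ := ⟨_, u, q, rfl, hq⟩
  obtain ⟨v, p, hpℓ, hodd⟩ := Nat.find_spec hex
  rw [← hpℓ] at hodd
  have hmin : ∀ (x : V) (q : H.Walk x x), Odd q.length → p.length ≤ q.length :=
    fun x q hq => hpℓ ▸ Nat.find_min' hex ⟨x, q, rfl, hq⟩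
  have hcount : #(range p.length) * H.minDegree ≤ #(univ : Finset V) * 2 :=
    card_mul_le_card_mul (fun i w => H.Adj (p.getVert i) w)
      (fun i _ => by
        simpa [bipartiteAbove, ← neighborFinset_eq_filter] using H.minDegree_le_degree _)
      (fun w _ => p.card_filter_adj_getVert_le_two h3 hodd hmin w)
  rw [card_range, card_univ] at hcount
  have := Nat.mul_le_mul_right H.minDegree (p.five_le_length_of_odd h3 hodd)
  omega

theorem Colorable.card_le_two_mul_indepNum [Fintype V] (h : H.Colorable 2) :
    Fintype.card V ≤ 2 * H.indepNum := by
  classical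
  obtain ⟨C⟩ := h
  have hclass : ∀ i, H.IsIndepSet ({v | C v = i} : Finset V) := fun i x hx y hy _ hxy =>
    C.valid hxy (by simp_all)
  have hsplit := card_filter_add_card_filter_not (s := univ) (fun v => C v = 0)
  have h1 : ({v | ¬ C v = 0} : Finset V) = ({v | C v = 1} : Finset V) := by
    ext v
    simp only [mem_filter, mem_univ, true_and]
    generalize C v = i
    fin_cases i <;> simp
  rw [h1, card_univ] at hsplit
  have := (hclass 0).card_le_indepNum
  have := (hclass 1).card_le_indepNum
  omega

end SimpleGraph

open SimpleGraph

section Pairing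

variable {V : Type*} [DecidableEq V] {H : SimpleGraph V} {P Q R : Finset (V × V)}
  {p q r : V × V} {u u' : V}

def ends (P : Finset (V × V)) : Finset V := P.image Prod.fst ∪ P.image Prod.snd

lemma mem_ends {x : V} : x ∈ ends P ↔ ∃ p ∈ P, p.1 = x ∨ p.2 = x := by
  simp only [ends, mem_union, mem_image]
  grind

@[simp] lemma ends_empty : ends (∅ : Finset (V × V)) = ∅ := rfl

@[simp] lemma ends_singleton : ends {p} = {p.1, p.2} := by
  ext x; simp only [mem_ends, mem_singleton, mem_insert]; grind

@[simp] lemma ends_insert : ends (insert p P) = insert p.1 (insert p.2 (ends P)) := by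
  ext x; simp only [mem_ends, mem_insert]; grind

lemma fst_mem_ends (hp : p ∈ P) : p.1 ∈ ends P := mem_ends.2 ⟨p, hp, .inl rfl⟩

lemma snd_mem_ends (hp : p ∈ P) : p.2 ∈ ends P := mem_ends.2 ⟨p, hp, .inr rfl⟩

lemma ends_union : ends (P ∪ Q) = ends P ∪ ends Q := by
  simp only [ends, image_union]; ac_rfl

lemma card_ends_le : #(ends P) ≤ 2 * #P := by
  have := card_union_le (P.image Prod.fst) (P.image Prod.snd)
  have := card_image_le (s := P) (f := Prod.fst)
  have := card_image_le (s := P) (f := Prod.snd)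
  rw [ends]; omega

/-- A matching of `H` given by ordered pairs: `card_ends` says that the `2 * #P` endpoints are
pairwise distinct. -/
structure IsPairing (H : SimpleGraph V) (P : Finset (V × V)) : Prop where
  adj : ∀ p ∈ P, H.Adj p.1 p.2
  card_ends : #(ends P) = 2 * #P

structure IsMaxPairing (H : SimpleGraph V) (P : Finset (V × V)) : Prop extends IsPairing H P where
  card_le : ∀ Q, IsPairing H Q → #Q ≤ #P

structure IsOrientedMaxPairing (H : SimpleGraph V) (P : Finset (V × V)) : Prop
    extends IsMaxPairing H P where
  not_adj_snd : ∀ p ∈ P, ∀ u ∉ ends P, ¬ H.Adj p.2 u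

namespace IsPairing

lemma card_image_fst_snd (hP : IsPairing H P) :
    #(P.image Prod.fst) = #P ∧ #(P.image Prod.snd) = #P ∧
      Disjoint (P.image Prod.fst) (P.image Prod.snd) := by
  have := card_union_add_card_inter (P.image Prod.fst) (P.image Prod.snd)
  have := card_image_le (s := P) (f := Prod.fst)
  have := card_image_le (s := P) (f := Prod.snd)
  have := hP.card_ends
  rw [ends] at this
  refine ⟨by omega, by omega, disjoint_iff_inter_eq_empty.2 (card_eq_zero.1 (by omega))⟩

lemma injOn_fst (hP : IsPairing H P) : Set.InjOn Prod.fst (P : Set (V × V)) :=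
  card_image_iff.1 hP.card_image_fst_snd.1

lemma injOn_snd (hP : IsPairing H P) : Set.InjOn Prod.snd (P : Set (V × V)) :=
  card_image_iff.1 hP.card_image_fst_snd.2.1

lemma fst_ne_snd (hP : IsPairing H P) (hp : p ∈ P) (hq : q ∈ P) : p.1 ≠ q.2 := fun h =>
  disjoint_left.1 hP.card_image_fst_snd.2.2 (mem_image_of_mem _ hp) (h ▸ mem_image_of_mem _ hq)

/-- Colour every vertex by itself, except that the second vertex of each pair takes the colour
of its partner. -/
lemma chromaticNumber_le [Fintype V] {G : SimpleGraph V} (hP : IsPairing Gᶜ P) :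
    G.chromaticNumber ≤ (Fintype.card V - #P : ℕ) := by
  classical
  let f : V → V := fun v => if h : ∃ p ∈ P, p.2 = v then h.choose.1 else v
  have hf : ∀ v, (∃ p ∈ P, p.2 = v ∧ f v = p.1) ∨ ((∀ p ∈ P, p.2 ≠ v) ∧ f v = v) := by
    intro v
    by_cases h : ∃ p ∈ P, p.2 = v
    · exact .inl ⟨h.choose, h.choose_spec.1, h.choose_spec.2, dif_pos h⟩
    · exact .inr ⟨fun p hp hpv => h ⟨p, hp, hpv⟩, dif_neg h⟩
  have hf_mem : ∀ v, f v ∈ (P.image Prod.snd)ᶜ := by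
    intro v
    rw [mem_compl, mem_image]
    rintro ⟨q, hq, hqv⟩
    rcases hf v with ⟨p, hp, -, hfv⟩ | ⟨hfree, hfv⟩
    · exact hP.fst_ne_snd hp hq (hqv.trans hfv).symm
    · exact hfree q hq (hqv.trans hfv)
  let C : G.Coloring ↥(P.image Prod.snd)ᶜ := Coloring.mk (fun v => ⟨f v, hf_mem v⟩) <| by
    intro u v huv heq
    replace heq : f u = f v := congrArg Subtype.val heq
    rcases hf u with ⟨p, hp, rfl, hfu⟩ | ⟨-, hfu⟩ <;>
      rcases hf v with ⟨q, hq, rfl, hfv⟩ | ⟨-, hfv⟩ <;> rw [hfu, hfv] at heq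
    · obtain rfl := hP.injOn_fst hp hq heq
      exact G.irrefl huv
    · subst heq
      exact ((compl_adj G _ _).1 (hP.adj p hp)).2 huv.symm
    · subst heq
      exact ((compl_adj G _ _).1 (hP.adj q hq)).2 huv
    · subst heq
      exact G.irrefl huv
  have hC := C.colorable
  rw [Fintype.card_coe, card_compl, hP.card_image_fst_snd.2.1] at hC
  exact hC.chromaticNumber_le

end IsPairing

lemma isPairing_empty : IsPairing H ∅ := ⟨by simp, by simp⟩

lemma exists_isMaxPairing [Fintype V] (H : SimpleGraph V) : ∃ P, IsMaxPairing H P := by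
  classical
  obtain ⟨P, hP, hmax⟩ := exists_max_image {P : Finset (V × V) | IsPairing H P} card
    ⟨∅, by simpa using isPairing_empty⟩
  exact ⟨P, (mem_filter.1 hP).2, fun Q hQ => hmax Q (by simpa using hQ)⟩

namespace IsMaxPairing

/-- Exchanging the pairs of `R` for those of `Q` would give a larger pairing, since `Q` also
covers the two uncovered vertices `u`, `u'`. -/
lemma card_add_two_le_of_exchange (hP : IsMaxPairing H P) (hRP : R ⊆ P)
    (hQ : ∀ q ∈ Q, H.Adj q.1 q.2) (hu : u ∉ ends P) (hu' : u' ∉ ends P) (huu' : u ≠ u')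
    (hRQ : insert u (insert u' (ends R)) ⊆ ends Q) : #R + 2 ≤ #Q := by
  by_contra! hQR
  have hcov : insert u (insert u' (ends P)) ⊆ ends ((P \ R) ∪ Q) := by
    have hPR : ends P = ends (P \ R) ∪ ends R := by
      rw [← ends_union, sdiff_union_of_subset hRP]
    rw [hPR, ends_union]
    intro x hx
    simp only [mem_insert, mem_union] at hx ⊢
    have := @hRQ x
    simp only [mem_insert] at this
    tauto
  have hcard_insert : #(insert u (insert u' (ends P))) = 2 * #P + 2 := by
    rw [card_insert_of_notMem (by simp [huu', hu]), card_insert_of_notMem hu',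
      hP.card_ends]
  have hle := card_le_card hcov
  have h1 := card_ends_le (P := (P \ R) ∪ Q)
  have h2 := card_union_le (P \ R) Q
  have h3 := card_sdiff_of_subset hRP
  have h4 := card_le_card hRP
  have hpair : IsPairing H ((P \ R) ∪ Q) :=
    ⟨fun q hq => (mem_union.1 hq).elim (fun h => hP.adj q (mem_sdiff.1 h).1) (hQ q), by omega⟩
  have := hP.card_le _ hpair
  omega

lemma not_adj_of_notMem_ends (hP : IsMaxPairing H P) (hu : u ∉ ends P) (hu' : u' ∉ ends P) :
    ¬ H.Adj u u' := fun h => by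
  have := hP.card_add_two_le_of_exchange (R := ∅) (Q := {(u, u')}) (empty_subset _)
    (by simpa using h) hu hu' h.ne (by simp)
  simp at this

lemma not_adj_snd_of_adj_fst (h3 : H.CliqueFree 3) (hP : IsMaxPairing H P) (hp : p ∈ P)
    (hu : u ∉ ends P) (hu' : u' ∉ ends P) (h : H.Adj p.1 u) : ¬ H.Adj p.2 u' := fun h' => by
  obtain rfl | huu' := eq_or_ne u u'
  · exact h3.not_adj_of_adj_of_adj h.symm h'.symm (hP.adj p hp)
  · have hex := hP.card_add_two_le_of_exchange (R := {p}) (Q := {(u, p.1), (p.2, u')})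
      (singleton_subset_iff.2 hp) (by simpa using ⟨h.symm, h'⟩) hu hu' huu'
      (by intro x; simp only [ends_insert, ends_singleton, mem_insert, mem_singleton]; tauto)
    rw [card_singleton] at hex
    have := card_le_two (a := (u, p.1)) (b := (p.2, u'))
    omega

lemma not_adj_snd_snd (hP : IsMaxPairing H P) (hp : p ∈ P) (hq : q ∈ P) (hpq : p ≠ q)
    (hu : u ∉ ends P) (hu' : u' ∉ ends P) (huu' : u ≠ u') (hup : H.Adj u p.1)
    (hu'q : H.Adj u' q.1) : ¬ H.Adj p.2 q.2 := fun h => by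
  have := hP.card_add_two_le_of_exchange (R := {p, q}) (Q := {(u, p.1), (u', q.1), (p.2, q.2)})
    (insert_subset hp (singleton_subset_iff.2 hq)) (by simpa using ⟨hup, hu'q, h⟩) hu hu' huu'
    (by intro x; simp only [ends_insert, ends_singleton, mem_insert, mem_singleton]; tauto)
  rw [card_pair hpq] at this
  have := card_le_three (a := (u, p.1)) (b := (u', q.1)) (c := (p.2, q.2))
  omega

lemma not_adj_of_adj_snd_fst (hP : IsMaxPairing H P) (hp : p ∈ P) (hq : q ∈ P) (hr : r ∈ P)
    (hpq : p ≠ q) (hpr : p ≠ r) (hqr : q ≠ r) (hu : u ∉ ends P) (hu' : u' ∉ ends P)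
    (huu' : u ≠ u') (hup : H.Adj u p.1) (hu'q : H.Adj u' q.1) (hpr₁ : H.Adj p.2 r.1) :
    ¬ H.Adj r.2 q.2 := fun h => by
  have := hP.card_add_two_le_of_exchange (R := {p, q, r})
    (Q := {(u, p.1), (u', q.1), (p.2, r.1), (r.2, q.2)})
    (insert_subset hp (insert_subset hq (singleton_subset_iff.2 hr)))
    (by simpa using ⟨hup, hu'q, hpr₁, h⟩) hu hu' huu'
    (by intro x; simp only [ends_insert, ends_singleton, mem_insert, mem_singleton]; tauto)
  rw [card_insert_of_notMem (by simp [hpq, hpr]), card_pair hqr] at this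
  have := card_le_four (a := (u, p.1)) (b := (u', q.1)) (c := (p.2, r.1)) (d := (r.2, q.2))
  omega

lemma isIndepSet_image_snd (hP : IsMaxPairing H P) {S : Finset (V × V)} (hSP : S ⊆ P)
    (h : ∀ p ∈ S, ∀ q ∈ S, p ≠ q →
      ∃ u ∉ ends P, ∃ u' ∉ ends P, u ≠ u' ∧ H.Adj u p.1 ∧ H.Adj u' q.1) :
    H.IsIndepSet (S.image Prod.snd : Set V) := by
  rintro _ hx _ hy hxy
  obtain ⟨p, hp, rfl⟩ := mem_image.1 hx
  obtain ⟨q, hq, rfl⟩ := mem_image.1 hy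
  have hpq : p ≠ q := by rintro rfl; exact hxy rfl
  obtain ⟨u, hu, u', hu', huu', hup, hu'q⟩ := h p hp q hq hpq
  exact hP.not_adj_snd_snd (hSP hp) (hSP hq) hpq hu hu' huu' hup hu'q

lemma exists_not_adj_snd (h3 : H.CliqueFree 3) (hP : IsMaxPairing H P) {p₀ : V × V}
    (hp₀ : p₀ ∈ P) {u₁ u₂ : V} (hu₁ : u₁ ∉ ends P) (hu₂ : u₂ ∉ ends P) (hu₁₂ : u₁ ≠ u₂)
    (hall : ∀ u ∉ ends P, ∀ q ∈ P, q ≠ p₀ → H.Adj u q.1) :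
    ∃ z, (z = p₀.1 ∨ z = p₀.2) ∧ ∀ q ∈ P, q ≠ p₀ → ¬ H.Adj z q.2 := by
  by_contra! hcon
  obtain ⟨q₁, hq₁, hq₁p, h₁⟩ := hcon p₀.1 (.inl rfl)
  obtain ⟨q₂, hq₂, hq₂p, h₂⟩ := hcon p₀.2 (.inr rfl)
  obtain rfl | hq₁₂ := eq_or_ne q₁ q₂
  · exact h3.not_adj_of_adj_of_adj h₁.symm h₂.symm (hP.adj p₀ hp₀)
  · exact hP.not_adj_of_adj_snd_fst hq₁ hq₂ hp₀ hq₁₂ hq₁p hq₂p hu₁ hu₂ hu₁₂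
      (hall u₁ hu₁ q₁ hq₁ hq₁p) (hall u₂ hu₂ q₂ hq₂ hq₂p) h₁.symm h₂

lemma card_sub_card_le_indepNum_of_subset [Fintype V] (hP : IsMaxPairing H P) {T : Finset V}
    (hT : H.IsIndepSet (T : Set V)) (hTP : T ⊆ ends P)
    (hTU : ∀ t ∈ T, ∀ u ∉ ends P, ¬ H.Adj t u) (hPT : #P ≤ #T) :
    Fintype.card V - #P ≤ H.indepNum := by
  have hindep : H.IsIndepSet (((ends P)ᶜ ∪ T : Finset V) : Set V) := by
    rw [coe_union, IsIndepSet, Set.pairwise_union]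
    refine ⟨fun x hx y hy _ => hP.not_adj_of_notMem_ends (mem_compl.1 hx) (mem_compl.1 hy), hT,
      fun x hx y hy _ => ⟨fun h => hTU y hy x (mem_compl.1 hx) h.symm, hTU y hy x (mem_compl.1 hx)⟩⟩
  have hcard := card_union_of_disjoint (disjoint_compl_left.mono_right hTP : Disjoint (ends P)ᶜ T)
  rw [card_compl, hP.card_ends] at hcard
  have := hindep.card_le_indepNum
  have := card_le_univ (ends P)
  rw [hP.card_ends] at this
  omega

end IsMaxPairing

lemma IsPairing.image_of_eq_or_eq_swap (hP : IsPairing H P) {g : V × V → V × V}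
    (hg : ∀ p, g p = p ∨ g p = p.swap) :
    IsPairing H (P.image g) ∧ ends (P.image g) = ends P ∧ #(P.image g) = #P := by
  have hends : ends (P.image g) = ends P := by
    ext x
    simp only [mem_ends, mem_image]
    constructor
    · rintro ⟨_, ⟨p, hp, rfl⟩, hx⟩
      refine ⟨p, hp, ?_⟩
      rcases hg p with h | h <;> rw [h] at hx
      exacts [hx, hx.symm]
    · rintro ⟨p, hp, hx⟩
      refine ⟨g p, ⟨p, hp, rfl⟩, ?_⟩
      rcases hg p with h | h <;> rw [h]
      exacts [hx, hx.symm]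
  have hcard : #(P.image g) = #P := by
    refine card_image_of_injOn fun p hp q hq hpq => ?_
    rcases hg p with h | h <;> rcases hg q with h' | h' <;>
      rw [h, h'] at hpq <;> simp only [Prod.ext_iff, Prod.fst_swap, Prod.snd_swap] at hpq
    · exact Prod.ext hpq.1 hpq.2
    · exact (hP.fst_ne_snd hp hq hpq.1).elim
    · exact (hP.fst_ne_snd hp hq hpq.2).elim
    · exact Prod.ext hpq.2 hpq.1
  refine ⟨⟨fun p' hp' => ?_, by rw [hends, hcard, hP.card_ends]⟩, hends, hcard⟩
  obtain ⟨p, hp, rfl⟩ := mem_image.1 hp'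
  rcases hg p with h | h <;> rw [h]
  exacts [hP.adj p hp, (hP.adj p hp).symm]

lemma exists_isOrientedMaxPairing [Fintype V] (h3 : H.CliqueFree 3) :
    ∃ P, IsOrientedMaxPairing H P := by
  classical
  obtain ⟨P, hP⟩ := exists_isMaxPairing H
  -- By `not_adj_snd_of_adj_fst`, flipping the pairs whose second vertex sees an uncovered
  -- vertex leaves no second vertex seeing one.
  let g : V × V → V × V := fun p => if ∃ u ∉ ends P, H.Adj p.2 u then p.swap else p
  have hg : ∀ p, g p = p ∨ g p = p.swap := fun p => by
    by_cases h : ∃ u ∉ ends P, H.Adj p.2 u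
    exacts [.inr (if_pos h), .inl (if_neg h)]
  obtain ⟨hgP, hends, hcard⟩ := hP.image_of_eq_or_eq_swap hg
  refine ⟨P.image g, ⟨hgP, fun Q hQ => hcard ▸ hP.card_le Q hQ⟩, fun p' hp' u hu => ?_⟩
  rw [hends] at hu
  obtain ⟨p, hp, rfl⟩ := mem_image.1 hp'
  by_cases h : ∃ u ∉ ends P, H.Adj p.2 u
  · obtain ⟨u', hu', h'⟩ := h
    rw [show g p = p.swap from if_pos ⟨u', hu', h'⟩]
    exact fun hadj => hP.not_adj_snd_of_adj_fst h3 hp hu hu' hadj h'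
  · rw [show g p = p from if_neg h]
    exact fun hadj => h ⟨u, hu, hadj⟩

namespace IsOrientedMaxPairing

variable [Fintype V] [DecidableRel H.Adj]

/-- Every neighbour of an uncovered vertex is the first vertex of some pair. -/
lemma degree_le_card_filter_adj_fst (hP : IsOrientedMaxPairing H P) (hu : u ∉ ends P) :
    H.degree u ≤ #{p ∈ P | H.Adj u p.1} := by
  rw [← card_neighborFinset_eq_degree]
  refine (card_le_card fun w hw => ?_).trans (card_image_le (f := Prod.fst))
  rw [mem_neighborFinset] at hw
  have hwP : w ∈ ends P := by
    by_contra hw'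
    exact hP.not_adj_of_notMem_ends hu hw' hw
  obtain ⟨p, hp, rfl | rfl⟩ := mem_ends.1 hwP
  · exact mem_image_of_mem _ (mem_filter.2 ⟨hp, hw⟩)
  · exact absurd hw.symm (hP.not_adj_snd p hp u hu)

lemma adj_fst_of_not_adj_fst (hP : IsOrientedMaxPairing H P) (hu : u ∉ ends P)
    (hdeg : #P ≤ H.degree u + 1) (hp : p ∈ P) (hq : q ∈ P) (hpq : p ≠ q)
    (hup : ¬ H.Adj u p.1) : H.Adj u q.1 := by
  by_contra huq
  have hmiss : #{p, q} ≤ #{r ∈ P | ¬ H.Adj u r.1} := card_le_card <| by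
    intro r hr
    rcases mem_insert.1 hr with rfl | hr
    · exact mem_filter.2 ⟨hp, hup⟩
    · exact mem_filter.2 ⟨(mem_singleton.1 hr) ▸ hq, (mem_singleton.1 hr) ▸ huq⟩
  rw [card_pair hpq] at hmiss
  have := hP.degree_le_card_filter_adj_fst hu
  have := card_filter_add_card_filter_not (s := P) (fun r => H.Adj u r.1)
  omega

lemma card_sub_card_le_indepNum_of_forall_adj_fst (hP : IsOrientedMaxPairing H P)
    (hU : 1 < #(ends P)ᶜ) (hdeg : ∀ u ∉ ends P, #P ≤ H.degree u + 1)
    (h : ∀ p ∈ P, ∃ u ∉ ends P, H.Adj u p.1) :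
    Fintype.card V - #P ≤ H.indepNum := by
  refine hP.card_sub_card_le_indepNum_of_subset (T := P.image Prod.snd)
    (hP.isIndepSet_image_snd subset_rfl fun p hp q hq hpq => ?_)
    (fun x hx => ?_) (fun x hx => ?_) (card_image_of_injOn hP.injOn_snd).ge
  · obtain ⟨u, hu, hup⟩ := h p hp
    obtain ⟨u', hu', hu'q⟩ := h q hq
    obtain rfl | huu' := eq_or_ne u u'
    · obtain ⟨w, hw, hwu⟩ := exists_mem_ne hU u
      rw [mem_compl] at hw
      by_cases hwp : H.Adj w p.1
      · exact ⟨w, hw, u, hu, hwu, hwp, hu'q⟩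
      · exact ⟨u, hu, w, hw, hwu.symm, hup,
          hP.adj_fst_of_not_adj_fst hw (hdeg w hw) hp hq hpq hwp⟩
    · exact ⟨u, hu, u', hu', huu', hup, hu'q⟩
  · obtain ⟨p, hp, rfl⟩ := mem_image.1 hx
    exact snd_mem_ends hp
  · obtain ⟨p, hp, rfl⟩ := mem_image.1 hx
    exact hP.not_adj_snd p hp

lemma card_sub_card_le_indepNum_of_not_adj_fst (h3 : H.CliqueFree 3)
    (hP : IsOrientedMaxPairing H P) (hU : 1 < #(ends P)ᶜ)
    (hdeg : ∀ u ∉ ends P, #P ≤ H.degree u + 1) {p₀ : V × V} (hp₀ : p₀ ∈ P)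
    (hp₀U : ∀ u ∉ ends P, ¬ H.Adj u p₀.1) :
    Fintype.card V - #P ≤ H.indepNum := by
  obtain ⟨u₁, hu₁, u₂, hu₂, hu₁₂⟩ := one_lt_card.1 hU
  rw [mem_compl] at hu₁ hu₂
  have hall : ∀ u ∉ ends P, ∀ q ∈ P, q ≠ p₀ → H.Adj u q.1 := fun u hu q hq hqp =>
    hP.adj_fst_of_not_adj_fst hu (hdeg u hu) hp₀ hq hqp.symm (hp₀U u hu)
  obtain ⟨z, hz, hzq⟩ := hP.exists_not_adj_snd h3 hp₀ hu₁ hu₂ hu₁₂ hall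
  have hzU : ∀ u ∉ ends P, ¬ H.Adj z u := by
    rcases hz with rfl | rfl
    · exact fun u hu h => hp₀U u hu h.symm
    · exact hP.not_adj_snd p₀ hp₀
  have hzT : z ∉ (P.erase p₀).image Prod.snd := by
    simp only [mem_image, mem_erase, not_exists, not_and]
    rintro q ⟨hqp, hq⟩ rfl
    rcases hz with h | h
    · exact hP.fst_ne_snd hp₀ hq h.symm
    · exact hqp (hP.injOn_snd hq hp₀ h)
  refine hP.card_sub_card_le_indepNum_of_subset
    (T := insert z ((P.erase p₀).image Prod.snd)) ?_ ?_ ?_ ?_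
  · rw [coe_insert, IsIndepSet, Set.pairwise_insert]
    refine ⟨hP.isIndepSet_image_snd (erase_subset _ _) fun p hp q hq _ =>
      ⟨u₁, hu₁, u₂, hu₂, hu₁₂, hall u₁ hu₁ p (mem_of_mem_erase hp) (ne_of_mem_erase hp),
        hall u₂ hu₂ q (mem_of_mem_erase hq) (ne_of_mem_erase hq)⟩, fun y hy _ => ?_⟩
    obtain ⟨q, hq, rfl⟩ := mem_image.1 hy
    exact ⟨hzq q (mem_of_mem_erase hq) (ne_of_mem_erase hq),
      fun h => hzq q (mem_of_mem_erase hq) (ne_of_mem_erase hq) h.symm⟩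
  · refine insert_subset ?_ fun x hx => ?_
    · rcases hz with rfl | rfl
      exacts [fst_mem_ends hp₀, snd_mem_ends hp₀]
    · obtain ⟨q, hq, rfl⟩ := mem_image.1 hx
      exact snd_mem_ends (mem_of_mem_erase hq)
  · refine forall_mem_insert _ _ _ |>.2 ⟨hzU, fun x hx => ?_⟩
    obtain ⟨q, hq, rfl⟩ := mem_image.1 hx
    exact hP.not_adj_snd q (mem_of_mem_erase hq)
  · rw [card_insert_of_notMem hzT, card_image_of_injOn (hP.injOn_snd.mono (erase_subset _ _)),
      card_erase_of_mem hp₀]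
    omega

lemma card_sub_card_le_indepNum (h3 : H.CliqueFree 3) (hP : IsOrientedMaxPairing H P)
    (hdeg : ∀ v, #P ≤ H.degree v + 1) (hn : #P + 9 ≤ Fintype.card V) :
    Fintype.card V - #P ≤ H.indepNum := by
  have hends := card_le_univ (ends P)
  rw [hP.card_ends] at hends
  rcases lt_or_ge 1 #(ends P)ᶜ with hU | hU
  · by_cases h : ∀ p ∈ P, ∃ u ∉ ends P, H.Adj u p.1
    · exact hP.card_sub_card_le_indepNum_of_forall_adj_fst hU (fun u _ => hdeg u) h
    · push Not at h
      obtain ⟨p₀, hp₀, hp₀U⟩ := h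
      exact hP.card_sub_card_le_indepNum_of_not_adj_fst h3 hU (fun u _ => hdeg u) hp₀ hp₀U
  · rw [card_compl, hP.card_ends] at hU
    have : Nonempty V := Fintype.card_pos_iff.1 (by omega)
    have hδ : #P ≤ H.minDegree + 1 := by
      obtain ⟨v, hv⟩ := H.exists_minimal_degree_vertex
      exact hv ▸ hdeg v
    have := (colorable_two_of_cliqueFree_three h3 (by omega)).card_le_two_mul_indepNum
    omega

end IsOrientedMaxPairing

end Pairing

/-- Borodin–Kostochka conjecture for `3K₁`-free graphs: if a finite simple graph `G`
is `3K₁`-free (i.e. its complement is triangle-free, equivalently `G` has no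
independent set of three vertices) and its maximum degree is at least `9`, then
`χ(G) ≤ max {ω(G), Δ(G) - 1}`. -/
theorem stmt_2 {V : Type*} [Fintype V] (G : SimpleGraph V) [DecidableRel G.Adj]
    (h3K1 : Gᶜ.CliqueFree 3) (hΔ : 9 ≤ G.maxDegree) :
    G.chromaticNumber ≤ (max G.cliqueNum (G.maxDegree - 1) : ℕ) := by
  classical
  obtain ⟨P, hP⟩ := exists_isOrientedMaxPairing h3K1
  refine hP.chromaticNumber_le.trans (Nat.cast_le.2 ?_)
  by_cases hΔP : Fintype.card V - #P ≤ G.maxDegree - 1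
  · exact hΔP.trans (le_max_right _ _)
  have hdeg : ∀ v, #P ≤ Gᶜ.degree v + 1 := fun v => by
    have := G.degree_le_maxDegree v
    have := G.degree_lt_card_verts v
    rw [degree_compl]
    omega
  have := hP.card_sub_card_le_indepNum h3K1 hdeg (by omega)
  rw [indepNum_compl] at this
  exact this.trans (le_max_left _ _)
end
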